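/- arXiv:2308.11987 — 3 statements merged into one kernel-verified Lean document; each statement's English description precedes it below -/
import Mathlib

section
/- Let m and m' be coprime positive integers and let v be a real number with v ≥ log m. Then Δ(m·m') ≥ τ(m) · Δ^{(v)}(m') / (2v + 1). -/
open Filter Topology
open scoped Classical

noncomputable def LLog (x : ℝ) : ℝ := max 1 (Real.log x)
noncomputable def LLog2 (x : ℝ) : ℝ := LLog (LLog x)
noncomputable def LLog3 (x : ℝ) : ℝ := LLog (LLog2 x)

/-- `Δ^{(v)}(n)`: the maximal number of divisors of `n` in an interval `(e^u, e^{u+v}]`. -/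
noncomputable def DeltaV (v : ℝ) (n : ℕ) : ℕ :=
  ⨆ u : ℝ, (n.divisors.filter fun d => Real.exp u < (d : ℝ) ∧ (d : ℝ) ≤ Real.exp (u + v)).card

/-- The Erdős–Hooley Delta function. -/
noncomputable def Delta (n : ℕ) : ℕ := DeltaV 1 n

/-- `S_{[y,x)}`: squarefree positive integers all of whose prime factors `p` satisfy `y ≤ p < x`. -/
def Sset (y x : ℝ) : Set ℕ :=
  {n | 0 < n ∧ Squarefree n ∧ ∀ p ∈ n.primeFactors, y ≤ (p : ℝ) ∧ (p : ℝ) < x}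

/-- `∏_{y ≤ p < x} (1 + 1/p)⁻¹`, product over primes. -/
noncomputable def primeProd (y x : ℝ) : ℝ :=
  ∏ᶠ p ∈ {p : ℕ | p.Prime ∧ y ≤ (p : ℝ) ∧ (p : ℝ) < x}, ((1 : ℝ) + 1 / p)⁻¹

/-- number of distinct prime factors -/
def omegaN (n : ℕ) : ℕ := n.primeFactors.card

/-- number of divisors -/
def tauN (n : ℕ) : ℕ := n.divisors.card

/-- `n_{<y}`: the largest divisor of `n` (squarefree) composed of primes `< y`. -/
noncomputable def nsmall (n : ℕ) (y : ℝ) : ℕ :=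
  ∏ p ∈ n.primeFactors.filter (fun p : ℕ => (p : ℝ) < y), p

def Yset (α x : ℝ) : Set ℝ :=
  {y | 0 < y ∧ |LLog2 y - α * LLog2 x| ≤ Real.sqrt (LLog2 x) ∧ ∃ m : ℤ, LLog2 y = m * Real.log 2}

def Uset (α x : ℝ) : Set ℤ :=
  {u | |(u : ℝ) - (Real.log 4 - 1) / Real.log 2 * (α * LLog2 x)| ≤ Real.sqrt (LLog2 x)}

noncomputable def Qfun (t : ℝ) : ℝ := t * Real.log t - t + 1

/-!
Let `u` be a point where `Δ^{(v)}(m')` is attained and `S` the divisors of `m'` in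
`(e^u, e^{u+v}]`. By coprimality the products `d e` with `d ∣ m`, `e ∈ S` are `τ(m) |S|` distinct
divisors of `m m'`, and since `d ≤ m ≤ e^v` they all lie in `(e^u, e^{u+2v}]`. That interval is
covered by `⌈2v⌉ ≤ 2v + 1` intervals of logarithmic length `1`, each containing at most
`Δ(m m')` divisors of `m m'`.
-/

open Finset Real

noncomputable def divisorsIn (n : ℕ) (u v : ℝ) : Finset ℕ :=
  n.divisors.filter fun d => exp u < d ∧ (d : ℝ) ≤ exp (u + v)

lemma mem_divisorsIn {n d : ℕ} {u v : ℝ} :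
    d ∈ divisorsIn n u v ↔ d ∣ n ∧ n ≠ 0 ∧ exp u < d ∧ (d : ℝ) ≤ exp (u + v) := by
  simp [divisorsIn, and_assoc]

-- `DeltaV` elaborates its filter over the image of `n.divisors` in `ℝ`.
lemma deltaV_eq_iSup_card_divisorsIn (v : ℝ) (n : ℕ) :
    DeltaV v n = ⨆ u : ℝ, #(divisorsIn n u v) := by
  refine congrArg iSup (funext fun u => ?_)
  simp only [Finset.pure_def, Finset.bind_def, Finset.sup_singleton_apply]
  rw [filter_image, card_image_of_injective _ Nat.cast_injective]
  rfl

lemma bddAbove_range_card_divisorsIn (n : ℕ) (v : ℝ) :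
    BddAbove (Set.range fun u => #(divisorsIn n u v)) :=
  ⟨#n.divisors, by rintro _ ⟨u, rfl⟩; exact card_filter_le _ _⟩

lemma card_divisorsIn_le_deltaV (n : ℕ) (u v : ℝ) : #(divisorsIn n u v) ≤ DeltaV v n := by
  rw [deltaV_eq_iSup_card_divisorsIn]
  exact le_ciSup (bddAbove_range_card_divisorsIn n v) u

lemma exists_card_divisorsIn_eq_deltaV (n : ℕ) (v : ℝ) :
    ∃ u, #(divisorsIn n u v) = DeltaV v n := by
  rw [deltaV_eq_iSup_card_divisorsIn]
  exact Nat.sSup_mem (Set.range_nonempty _) (bddAbove_range_card_divisorsIn n v)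

lemma divisorsIn_mono {n : ℕ} {u v w : ℝ} (hvw : v ≤ w) : divisorsIn n u v ⊆ divisorsIn n u w := by
  intro d hd
  obtain ⟨hdn, hn, hlo, hhi⟩ := mem_divisorsIn.mp hd
  exact mem_divisorsIn.mpr ⟨hdn, hn, hlo, hhi.trans (exp_le_exp.mpr (by linarith))⟩

lemma divisorsIn_add (n : ℕ) (u v w : ℝ) (hv : 0 ≤ v) (hw : 0 ≤ w) :
    divisorsIn n u (v + w) = divisorsIn n u v ∪ divisorsIn n (u + v) w := by
  ext d
  simp only [mem_union, mem_divisorsIn, ← add_assoc]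
  have hu : exp u ≤ exp (u + v) := exp_le_exp.mpr (le_add_of_nonneg_right hv)
  have huv : exp (u + v) ≤ exp (u + v + w) := exp_le_exp.mpr (le_add_of_nonneg_right hw)
  constructor
  · rintro ⟨hd, hn, hlo, hhi⟩
    rcases le_or_gt (d : ℝ) (exp (u + v)) with h | h
    exacts [.inl ⟨hd, hn, hlo, h⟩, .inr ⟨hd, hn, h, hhi⟩]
  · rintro (⟨hd, hn, hlo, hhi⟩ | ⟨hd, hn, hlo, hhi⟩)
    exacts [⟨hd, hn, hlo, by linarith⟩, ⟨hd, hn, by linarith, hhi⟩]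

lemma card_divisorsIn_natCast_mul_le (n : ℕ) (u : ℝ) {v : ℝ} (hv : 0 ≤ v) (k : ℕ) :
    #(divisorsIn n u (k * v)) ≤ k * DeltaV v n := by
  induction k with
  | zero => simp [divisorsIn]
  | succ k ih =>
    calc #(divisorsIn n u ((k + 1 : ℕ) * v))
        = #(divisorsIn n u (k * v) ∪ divisorsIn n (u + k * v) v) := by
          rw [← divisorsIn_add _ _ _ _ (by positivity) hv]; push_cast; ring_nf
      _ ≤ k * DeltaV v n + DeltaV v n :=
          (card_union_le _ _).trans (add_le_add ih (card_divisorsIn_le_deltaV _ _ _))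
      _ = (k + 1) * DeltaV v n := by ring

lemma card_divisorsIn_le_ceil_mul_delta (n : ℕ) (u : ℝ) {w : ℝ} :
    #(divisorsIn n u w) ≤ ⌈w⌉₊ * Delta n := by
  calc #(divisorsIn n u w) ≤ #(divisorsIn n u (⌈w⌉₊ * 1)) :=
        card_le_card (divisorsIn_mono (by simpa using Nat.le_ceil w))
    _ ≤ ⌈w⌉₊ * Delta n := card_divisorsIn_natCast_mul_le n u zero_le_one _

lemma mul_mem_divisorsIn {m n d e : ℕ} {u v w : ℝ} (hdm : d ∈ m.divisors)
    (hm : (m : ℝ) ≤ exp w) (he : e ∈ divisorsIn n u v) : d * e ∈ divisorsIn (m * n) u (v + w) := by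
  obtain ⟨hen, hn, hlo, hhi⟩ := mem_divisorsIn.mp he
  obtain ⟨hd, hm0⟩ := Nat.mem_divisors.mp hdm
  have hd1 : (1 : ℝ) ≤ d := by exact_mod_cast Nat.pos_of_dvd_of_pos hd (Nat.pos_of_ne_zero hm0)
  have hdw : (d : ℝ) ≤ exp w := (Nat.cast_le.mpr (Nat.le_of_dvd (Nat.pos_of_ne_zero hm0) hd)).trans hm
  refine mem_divisorsIn.mpr ⟨mul_dvd_mul hd hen, mul_ne_zero hm0 hn, ?_, ?_⟩
  · push_cast
    nlinarith
  · calc ((d * e : ℕ) : ℝ) = d * e := by push_cast; ring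
      _ ≤ exp w * exp (u + v) := mul_le_mul hdw hhi (by positivity) (exp_pos w).le
      _ = exp (u + (v + w)) := by rw [← exp_add]; ring_nf

lemma tauN_mul_card_le_card_divisorsIn {m n : ℕ} (hmn : m.Coprime n) {u v w : ℝ}
    (hm : (m : ℝ) ≤ exp w) :
    tauN m * #(divisorsIn n u v) ≤ #(divisorsIn (m * n) u (v + w)) := by
  have hinj : Set.InjOn (fun p : ℕ × ℕ => p.1 * p.2) ↑(m.divisors ×ˢ divisorsIn n u v) :=
    hmn.mul_injOn_divisors.mono (coe_subset.mpr (product_subset_product_right (filter_subset _ _)))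
  rw [tauN, ← card_product, ← card_image_of_injOn hinj]
  refine card_le_card (image_subset_iff.mpr fun ⟨d, e⟩ hde => ?_)
  obtain ⟨hd, he⟩ := mem_product.mp hde
  exact mul_mem_divisorsIn hd hm he

theorem statement7_general (m m' : ℕ)
    (hcop : Nat.Coprime m m') (v : ℝ) (hv : Real.log m ≤ v) :
    (tauN m : ℝ) * (DeltaV v m' : ℝ) / (2 * v + 1) ≤ (Delta (m * m') : ℝ) := by
  have hv0 : 0 ≤ v := (log_natCast_nonneg m).trans hv
  obtain ⟨u, hu⟩ := exists_card_divisorsIn_eq_deltaV m' v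
  have hcount : tauN m * DeltaV v m' ≤ ⌈v + v⌉₊ * Delta (m * m') := by
    rw [← hu]
    exact (tauN_mul_card_le_card_divisorsIn hcop ((le_exp_log _).trans (exp_le_exp.mpr hv))).trans
      (card_divisorsIn_le_ceil_mul_delta _ _)
  have hceil : (⌈v + v⌉₊ : ℝ) ≤ 2 * v + 1 := by
    linarith [Nat.ceil_lt_add_one (by linarith : (0 : ℝ) ≤ v + v)]
  rw [div_le_iff₀ (by linarith)]
  calc (tauN m : ℝ) * DeltaV v m' ≤ ⌈v + v⌉₊ * Delta (m * m') := by exact_mod_cast hcount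
    _ ≤ (2 * v + 1) * Delta (m * m') := by gcongr
    _ = Delta (m * m') * (2 * v + 1) := mul_comm _ _

theorem statement7 (m m' : ℕ) (hm : 0 < m) (hm' : 0 < m')
    (hcop : Nat.Coprime m m') (v : ℝ) (hv : Real.log m ≤ v) :
    (tauN m : ℝ) * (DeltaV v m' : ℝ) / (2 * v + 1) ≤ (Delta (m * m') : ℝ) :=
  statement7_general m m' hcop v hv
end

section
/- Let 3 ≤ y ≤ x, set λ := y^{1/(20·Log₂ x)}, and let n be a squarefree positive integer all of whose prime factors p satisfy y ≤ p < x, with ω(n) < 2·Log₂ x. Let A := {a ∈ ℤ : λ^{a−2} ≥ y, λ^{a−1} ≤ x, and n has a prime factor p with λ^{a−2} ≤ p < λ^{a−1}}. Then Δ^{(Log y)}(n) ≥ m(A). -/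
open Filter Topology
open scoped Classical

/-- The subsum multiplicity of a set of integers: the largest `m` for which there exist
`m` distinct finite subsets with equal sums. -/
noncomputable def msub (A : Set ℤ) : ℕ :=
  sSup {m | ∃ F : Finset (Finset ℤ), F.card = m ∧ (∀ B ∈ F, ↑B ⊆ A) ∧
    ∃ s : ℤ, ∀ B ∈ F, (∑ a ∈ B, a) = s}


open Finset Real

/-!
Each `a ∈ A` comes with a prime `p_a ∣ n` in `[λ^(a-2), λ^(a-1))`. These intervals are disjoint,
so `a ↦ p_a` is injective and a subset `B ⊆ A` can be read off from the divisor
`d_B = ∏_{a ∈ B} p_a` of `n`. If all the `B` have the same sum `s`, then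
`log d_B ∈ [(s - 2 ω(n)) log λ, s log λ]`, an interval of length `2 ω(n) log λ < (log y) / 5`,
so the `d_B` are distinct divisors of `n` lying in a single interval of logarithmic length `Log y`.
-/

theorem card_le_deltaV {n : ℕ} {u v : ℝ} {s : Finset ℕ} (hs : s ⊆ n.divisors)
    (hu : ∀ d ∈ s, exp u < d ∧ (d : ℝ) ≤ exp (u + v)) : #s ≤ DeltaV v n := by
  -- the ascription `(d : ℝ)` in `DeltaV` makes its filter run over the image of `n.divisors` in `ℝ`
  have hcast : (do let d ← n.divisors; pure (d : ℝ) : Finset ℝ) = n.divisors.image Nat.cast :=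
    sup_singleton_apply _ _
  rw [DeltaV, hcast]
  refine le_ciSup_of_le ⟨#n.divisors, ?_⟩ u ?_
  · rintro _ ⟨w, rfl⟩
    exact (card_filter_le _ _).trans card_image_le
  · rw [← card_image_of_injective s (Nat.cast_injective (R := ℝ)), filter_image]
    exact card_le_card (image_subset_image fun d hd => mem_filter.2 ⟨hs hd, hu d hd⟩)

theorem msub_le {A : Set ℤ} {N : ℕ}
    (h : ∀ F : Finset (Finset ℤ), (∀ B ∈ F, ↑B ⊆ A) → ∀ s : ℤ,
      (∀ B ∈ F, ∑ a ∈ B, a = s) → #F ≤ N) :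
    msub A ≤ N :=
  csSup_le ⟨0, ∅, rfl, by simp, 0, by simp⟩ fun _ ⟨F, hF, hA, s, hs⟩ => hF ▸ h F hA s hs

theorem strictMonoOn_of_mem_Ico_zpow {lam : ℝ} (hlam : 1 < lam) {A : Set ℤ} {f : ℤ → ℝ}
    (hf : ∀ a ∈ A, f a ∈ Set.Ico (lam ^ (a - 2)) (lam ^ (a - 1))) : StrictMonoOn f A :=
  fun a ha b hb hab => calc
    f a < lam ^ (a - 1) := (hf a ha).2
    _ ≤ lam ^ (b - 2) := zpow_le_zpow_right₀ hlam.le (by omega)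
    _ ≤ f b := (hf b hb).1

theorem log_prod_mem_Icc {lam : ℝ} (hlam : 0 < lam) {B : Finset ℤ} {f : ℤ → ℝ}
    (hf : ∀ a ∈ B, f a ∈ Set.Icc (lam ^ (a - 2)) (lam ^ (a - 1))) :
    log (∏ a ∈ B, f a) ∈
      Set.Icc ((∑ a ∈ B, (a : ℝ) - 2 * #B) * log lam) ((∑ a ∈ B, (a : ℝ) - #B) * log lam) := by
  have hlog : ∀ k : ℤ, log (lam ^ k) = k * log lam := fun k => by rw [log_zpow]
  have hpos : ∀ a ∈ B, 0 < f a := fun a ha => (zpow_pos hlam _).trans_le (hf a ha).1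
  rw [log_prod fun a ha => (hpos a ha).ne']
  constructor
  · calc (∑ a ∈ B, (a : ℝ) - 2 * #B) * log lam = ∑ a ∈ B, log (lam ^ (a - 2)) := by
          simp only [hlog]; push_cast
          rw [← sum_mul, sum_sub_distrib, sum_const, nsmul_eq_mul]; ring
      _ ≤ ∑ a ∈ B, log (f a) :=
          sum_le_sum fun a ha => log_le_log (zpow_pos hlam _) (hf a ha).1
  · calc ∑ a ∈ B, log (f a) ≤ ∑ a ∈ B, log (lam ^ (a - 1)) :=
          sum_le_sum fun a ha => log_le_log (hpos a ha) (hf a ha).2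
      _ = (∑ a ∈ B, (a : ℝ) - #B) * log lam := by
          simp only [hlog]; push_cast
          rw [← sum_mul, sum_sub_distrib, sum_const, nsmul_eq_mul, mul_one]

section PrimeSelection

variable {n : ℕ} {A : Set ℤ} {P : ℤ → ℕ}

theorem prod_eq_prod_image (hinj : Set.InjOn P A) {B : Finset ℤ} (hB : ↑B ⊆ A) :
    ∏ a ∈ B, P a = ∏ p ∈ B.image P, p :=
  (prod_image (f := fun p => p) fun _ ha _ hb h => hinj (hB ha) (hB hb) h).symm

theorem prod_dvd_of_mapsTo_primeFactors (hP : Set.MapsTo P A n.primeFactors)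
    (hinj : Set.InjOn P A) {B : Finset ℤ} (hB : ↑B ⊆ A) : ∏ a ∈ B, P a ∣ n := by
  rw [prod_eq_prod_image hinj hB]
  exact (prod_dvd_prod_of_subset _ _ _ (image_subset_iff.2 fun a ha => hP (hB ha))).trans
    (Nat.prod_primeFactors_dvd n)

theorem injOn_prod_of_prime (hP : ∀ a ∈ A, (P a).Prime) (hinj : Set.InjOn P A) :
    Set.InjOn (fun B : Finset ℤ => ∏ a ∈ B, P a) {B | ↑B ⊆ A} := by
  have hfactors : ∀ B : Finset ℤ, ↑B ⊆ A → (∏ a ∈ B, P a).primeFactors = B.image P := fun B hB => by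
    rw [prod_eq_prod_image hinj hB]
    exact Nat.primeFactors_prod fun p hp => by
      obtain ⟨a, ha, rfl⟩ := mem_image.1 hp
      exact hP a (hB ha)
  intro B hB C hC h
  have himage : P '' B = P '' C := by
    rw [← coe_image, ← coe_image, ← hfactors B hB, ← hfactors C hC]
    exact congrArg _ (congrArg _ h)
  exact coe_injective ((hinj.image_eq_image_iff hB hC).1 himage)

end PrimeSelection

theorem msub_le_deltaV {lam v : ℝ} {n : ℕ} {A : Set ℤ} (hlam : 1 < lam) (hn : 0 < n)
    (hv : 2 * (omegaN n : ℝ) * log lam < v)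
    (hA : ∀ a ∈ A, ∃ p ∈ n.primeFactors, lam ^ (a - 2) ≤ (p : ℝ) ∧ (p : ℝ) < lam ^ (a - 1)) :
    msub A ≤ DeltaV v n := by
  choose! P hPn hPlow hPup using hA
  have hinj : Set.InjOn P A :=
    (strictMonoOn_of_mem_Ico_zpow hlam (f := fun a => (P a : ℝ))
      fun a ha => ⟨hPlow a ha, hPup a ha⟩).injOn.of_comp
  have hprime : ∀ a ∈ A, (P a).Prime := fun a ha => Nat.prime_of_mem_primeFactors (hPn a ha)
  refine msub_le fun F hF s hs => ?_
  set D : Finset ℤ → ℕ := fun B => ∏ a ∈ B, P a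
  rw [← card_image_of_injOn ((injOn_prod_of_prime hprime hinj).mono hF)]
  refine card_le_deltaV (u := s * log lam - v) (fun d hd => ?_) fun d hd => ?_
  · obtain ⟨B, hB, rfl⟩ := mem_image.1 hd
    exact Nat.mem_divisors.2 ⟨prod_dvd_of_mapsTo_primeFactors hPn hinj (hF B hB), hn.ne'⟩
  obtain ⟨B, hB, rfl⟩ := mem_image.1 hd
  have hDpos : (0 : ℝ) < D B := by
    exact_mod_cast Nat.pos_of_dvd_of_pos (prod_dvd_of_mapsTo_primeFactors hPn hinj (hF B hB)) hn
  have hcard : (#B : ℝ) ≤ omegaN n := by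
    rw [← card_image_of_injOn (hinj.mono (hF B hB))]
    exact_mod_cast card_le_card (image_subset_iff.2 fun a ha => hPn a (hF B hB ha))
  have hsum : ∑ a ∈ B, (a : ℝ) = s := by rw [← hs B hB, Int.cast_sum]
  have hlog := log_prod_mem_Icc (zero_lt_one.trans hlam) fun a ha =>
    ⟨hPlow a (hF B hB ha), (hPup a (hF B hB ha)).le⟩
  rw [← Nat.cast_prod, hsum] at hlog
  have hl : 0 < log lam := log_pos hlam
  constructor
  · rw [← lt_log_iff_exp_lt hDpos]
    nlinarith [hlog.1]
  · rw [← log_le_iff_le_exp hDpos]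
    nlinarith [hlog.2]

theorem statement15_general (x y : ℝ) (hy : 3 ≤ y)
    (lam : ℝ) (hlam : lam = y ^ (1 / (20 * LLog2 x)))
    (n : ℕ) (hn : 0 < n)
    (hom : (omegaN n : ℝ) < 2 * LLog2 x) :
    msub {a : ℤ | y ≤ lam ^ (a - 2) ∧ lam ^ (a - 1) ≤ x ∧
        ∃ p ∈ n.primeFactors, lam ^ (a - 2) ≤ (p : ℝ) ∧ (p : ℝ) < lam ^ (a - 1)}
      ≤ DeltaV (LLog y) n := by
  have hLx : 0 < LLog2 x := zero_lt_one.trans_le (le_max_left _ _)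
  have hlogy : 0 < log y := log_pos (by linarith)
  have hloglam : log lam * (20 * LLog2 x) = log y := by
    rw [hlam, log_rpow (by linarith)]; field_simp
  have hlam1 : 1 < lam := by
    rw [← log_pos_iff (by rw [hlam]; positivity)]
    nlinarith
  have hl : 0 < log lam := log_pos hlam1
  refine msub_le_deltaV hlam1 hn ?_ fun a ha => ha.2.2
  calc 2 * (omegaN n : ℝ) * log lam ≤ 2 * (2 * LLog2 x) * log lam := by gcongr
    _ < log y := by nlinarith
    _ ≤ LLog y := le_max_right _ _

theorem statement15 (x y : ℝ) (hy : 3 ≤ y) (hyx : y ≤ x)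
    (lam : ℝ) (hlam : lam = y ^ (1 / (20 * LLog2 x)))
    (n : ℕ) (hn : 0 < n) (hsq : Squarefree n)
    (hpf : ∀ p ∈ n.primeFactors, y ≤ (p : ℝ) ∧ (p : ℝ) < x)
    (hom : (omegaN n : ℝ) < 2 * LLog2 x) :
    msub {a : ℤ | y ≤ lam ^ (a - 2) ∧ lam ^ (a - 1) ≤ x ∧
        ∃ p ∈ n.primeFactors, lam ^ (a - 2) ≤ (p : ℝ) ∧ (p : ℝ) < lam ^ (a - 1)}
      ≤ DeltaV (LLog y) n :=
  statement15_general x y hy lam hlam n hn hom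
end

section
/- There is an absolute constant C > 0 such that for all 1 ≤ y ≤ x one has ∏_{y ≤ p < x}(1 + 1/p)^{-1} · ∑_{n ∈ S_{[y,x)}, ω(n) ≥ 2·Log₂ x} 1/n ≤ C/(Log x)^{log 4 − 1}. -/
open Filter Topology
open scoped Classical

/-! By Rankin's trick, on the range `ω(n) ≥ 2 Log₂ x` the weight `1/n` is at most
`4^{-Log₂ x} 2^{ω(n)}/n`, and `∑_{n ∈ S_{[y,x)}} 2^{ω(n)}/n = ∏ (1 + 2/p)`. Against
`∏ (1 + 1/p)⁻¹` this leaves at most `∏_{p < x} (1 + 1/p)`, which is `O(Log x)`: for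
`σ = 1 + 1/Log x` one has `1 + 1/p ≤ (1 + p^{-σ}) exp (log p / (p Log x))`, the product of the
`1 + p^{-σ}` is at most `∑_{n ≤ N} n^{-σ} ≤ σ/(σ - 1) = Log x + 1`, and the exponential factors
are bounded by Mertens' estimate `∑_{p ≤ n} log p / p ≤ log n + log 4`. -/

open Finset Real
open scoped Nat

theorem Nat.prod_primesLE_pow_div_dvd_factorial (n : ℕ) :
    ∏ p ∈ n.primesLE, p ^ (n / p) ∣ n ! := by
  refine Finset.prod_dvd_of_isRelPrime (fun p hp q hq hpq => ?_) fun p hp => ?_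
  · have hp := (Nat.mem_primesLE.1 hp).2
    have hq := (Nat.mem_primesLE.1 hq).2
    exact Nat.coprime_iff_isRelPrime.1 (((Nat.coprime_primes hp hq).2 hpq).pow _ _)
  · obtain ⟨hpn, hp⟩ := Nat.mem_primesLE.1 hp
    rw [hp.pow_dvd_factorial_iff (Nat.lt_succ_self _)]
    have h1 : 1 ∈ Ico 1 (Nat.log p n + 1) := by
      simpa using Nat.log_pos hp.one_lt hpn
    simpa using single_le_sum (f := fun i => n / p ^ i) (fun _ _ => Nat.zero_le _) h1

theorem sum_primesLE_log_div_le (n : ℕ) :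
    ∑ p ∈ n.primesLE, log p / p ≤ log n + log 4 := by
  rcases Nat.eq_zero_or_pos n with rfl | hn
  · simp only [Nat.primesLE, zero_add, Nat.primesBelow_one, sum_empty, CharP.cast_eq_zero,
      log_zero]
    positivity
  have hn' : (0 : ℝ) < n := by exact_mod_cast hn
  have hprime {p} (hp : p ∈ n.primesLE) : p.Prime := (Nat.mem_primesLE.1 hp).2
  have hlegendre : ∑ p ∈ n.primesLE, ((n / p : ℕ) : ℝ) * log p ≤ n * log n := by
    calc ∑ p ∈ n.primesLE, ((n / p : ℕ) : ℝ) * log p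
        = log (∏ p ∈ n.primesLE, p ^ (n / p) : ℕ) := by
          push_cast
          rw [log_prod fun p hp => by have := (hprime hp).pos; positivity]
          simp_rw [log_pow]
      _ ≤ log (n ^ n : ℕ) :=
          log_le_log (Nat.cast_pos.2 (prod_pos fun p hp => pow_pos (hprime hp).pos _))
            (Nat.cast_le.2 ((Nat.le_of_dvd n.factorial_pos
              n.prod_primesLE_pow_div_dvd_factorial).trans n.factorial_le_pow))
      _ = n * log n := by push_cast; rw [log_pow]
  have hfloor : ∀ p ∈ n.primesLE, (n / p : ℝ) * log p ≤ ((n / p : ℕ) + 1) * log p := by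
    intro p hp
    have : (1 : ℝ) ≤ p := by exact_mod_cast (hprime hp).one_le
    gcongr
    rw [← Nat.floor_div_eq_div (K := ℝ)]
    exact (Nat.lt_floor_add_one _).le
  have hcheb : ∑ p ∈ n.primesLE, log p ≤ log 4 * n := by
    rw [← Chebyshev.theta_eq_sum_primesLE_log]
    exact Chebyshev.theta_le_log4_mul_x n.cast_nonneg
  refine le_of_mul_le_mul_left ?_ hn'
  calc n * ∑ p ∈ n.primesLE, log p / p = ∑ p ∈ n.primesLE, (n / p : ℝ) * log p := by
        rw [mul_sum]; congr! 1 with p; ring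
    _ ≤ ∑ p ∈ n.primesLE, ((n / p : ℕ) + 1) * log p := sum_le_sum hfloor
    _ = ∑ p ∈ n.primesLE, ((n / p : ℕ) : ℝ) * log p + ∑ p ∈ n.primesLE, log p := by
        rw [← sum_add_distrib]; congr! 1 with p; ring
    _ ≤ n * (log n + log 4) := by linarith

theorem sum_Icc_rpow_neg_le {σ : ℝ} (hσ : 1 < σ) (N : ℕ) :
    ∑ k ∈ Icc 1 N, (k : ℝ) ^ (-σ) ≤ σ / (σ - 1) := by
  have hσ1 : 0 < σ - 1 := by linarith
  rcases Nat.eq_zero_or_pos N with rfl | hN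
  · simpa using div_nonneg (by linarith) hσ1.le
  have hanti : AntitoneOn (fun x : ℝ => x ^ (-σ)) (Set.Icc (1 : ℕ) N) := by
    intro a ha b hb hab
    simp only [Set.mem_Icc, Nat.cast_one] at ha hb
    exact rpow_le_rpow_of_nonpos (by linarith) hab (by linarith)
  have htail : ∑ i ∈ Ico 1 N, ((i + 1 : ℕ) : ℝ) ^ (-σ) ≤ ∫ x in (1 : ℕ)..(N : ℝ), x ^ (-σ) :=
    hanti.sum_le_integral_Ico hN
  have hzero : (0 : ℝ) ∉ Set.uIcc ((1 : ℕ) : ℝ) N := by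
    rw [Set.uIcc_of_le (by exact_mod_cast hN)]
    simp
  rw [integral_rpow (Or.inr ⟨by linarith, hzero⟩), Nat.cast_one, one_rpow,
    show -σ + 1 = -(σ - 1) by ring, div_neg, ← neg_div, neg_sub] at htail
  have hsplit : ∑ k ∈ Icc 1 N, (k : ℝ) ^ (-σ) = 1 + ∑ i ∈ Ico 1 N, ((i + 1 : ℕ) : ℝ) ^ (-σ) := by
    rw [← Ico_add_one_right_eq_Icc, sum_eq_sum_Ico_succ_bot (by omega),
      sum_Ico_add' (f := fun k : ℕ => (k : ℝ) ^ (-σ))]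
    simp
  have hNpow : 0 ≤ (N : ℝ) ^ (-(σ - 1)) := by positivity
  calc ∑ k ∈ Icc 1 N, (k : ℝ) ^ (-σ) ≤ 1 + (1 - (N : ℝ) ^ (-(σ - 1))) / (σ - 1) := by
        rw [hsplit]; gcongr
    _ ≤ 1 + 1 / (σ - 1) := by gcongr; linarith
    _ = σ / (σ - 1) := by field_simp; ring

theorem injOn_prod_powerset {P : Finset ℕ} (hP : ∀ p ∈ P, p.Prime) :
    Set.InjOn (fun s : Finset ℕ => ∏ p ∈ s, p) P.powerset := by
  intro s hs t ht hst
  have hs' : ∀ p ∈ s, p.Prime := fun p hp => hP p (mem_powerset.1 hs hp)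
  have ht' : ∀ p ∈ t, p.Prime := fun p hp => hP p (mem_powerset.1 ht hp)
  rw [← Nat.primeFactors_prod hs', ← Nat.primeFactors_prod ht']
  exact congrArg Nat.primeFactors hst

theorem prod_one_add_rpow_neg_le {σ : ℝ} (hσ : 1 < σ) {P : Finset ℕ} (hP : ∀ p ∈ P, p.Prime) :
    ∏ p ∈ P, (1 + (p : ℝ) ^ (-σ)) ≤ σ / (σ - 1) := by
  have himage : P.powerset.image (fun s => ∏ p ∈ s, p) ⊆ Icc 1 (∏ p ∈ P, p) := by
    simp only [subset_iff, mem_image, mem_powerset, mem_Icc]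
    rintro _ ⟨s, hsP, rfl⟩
    exact ⟨prod_pos fun p hp => (hP p (hsP hp)).pos,
      Nat.le_of_dvd (prod_pos fun p hp => (hP p hp).pos) (prod_dvd_prod_of_subset _ _ _ hsP)⟩
  calc ∏ p ∈ P, (1 + (p : ℝ) ^ (-σ))
      = ∑ n ∈ P.powerset.image (fun s => ∏ p ∈ s, p), (n : ℝ) ^ (-σ) := by
        rw [prod_one_add, sum_image (injOn_prod_powerset hP)]
        refine sum_congr rfl fun s _ => ?_
        rw [Nat.cast_prod, finsetProd_rpow _ _ fun p _ => p.cast_nonneg]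
    _ ≤ ∑ n ∈ Icc 1 (∏ p ∈ P, p), (n : ℝ) ^ (-σ) :=
        sum_le_sum_of_subset_of_nonneg himage fun _ _ _ => by positivity
    _ ≤ σ / (σ - 1) := sum_Icc_rpow_neg_le hσ _

theorem one_add_one_div_le_mul_exp {t L : ℝ} (ht : 1 ≤ t) (hL : 0 < L) :
    1 + 1 / t ≤ (1 + t ^ (-(1 + L⁻¹))) * exp (log t / (t * L)) := by
  have ht0 : 0 < t := by linarith
  have hv : 0 ≤ log t / L := div_nonneg (log_nonneg ht) hL.le
  have hpow : t ^ (-(1 + L⁻¹)) = 1 / t * exp (-(log t / L)) := by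
    rw [rpow_def_of_pos ht0, neg_add, mul_add, exp_add, mul_neg_one, exp_neg, exp_log ht0]
    ring_nf
  have hu : log t / (t * L) = 1 / t * (log t / L) := by field_simp
  rw [hpow, hu]
  set a := 1 / t
  set v := log t / L
  have ha : 0 ≤ a := by positivity
  have h1 : 1 - exp (-v) ≤ v := by linarith [add_one_le_exp (-v)]
  have hav : 0 ≤ a * v := mul_nonneg ha hv
  calc 1 + a ≤ 1 + a * exp (-v) + a * v := by nlinarith [mul_le_mul_of_nonneg_left h1 ha]
    _ ≤ (1 + a * exp (-v)) * (1 + a * v) := by nlinarith [mul_nonneg ha (exp_pos (-v)).le]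
    _ ≤ (1 + a * exp (-v)) * exp (a * v) := by
        gcongr
        linarith [add_one_le_exp (a * v)]

theorem prod_one_add_one_div_le {n : ℕ} {P : Finset ℕ} (hP : P ⊆ n.primesLE) {L : ℝ} (hL : 1 ≤ L)
    (hn : log n ≤ L) : ∏ p ∈ P, (1 + 1 / (p : ℝ)) ≤ 4 * exp 1 * (L + 1) := by
  have hprime : ∀ p ∈ P, p.Prime := fun p hp => (Nat.mem_primesLE.1 (hP hp)).2
  have hL0 : 0 < L := by linarith
  have hmertens : ∑ p ∈ P, log p / (p * L) ≤ 1 + log 4 := by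
    have hsub : ∑ p ∈ P, log p / p ≤ ∑ p ∈ n.primesLE, log p / p :=
      sum_le_sum_of_subset_of_nonneg hP fun p _ _ => by positivity
    have h4 : 0 ≤ log 4 := by positivity
    calc ∑ p ∈ P, log p / (p * L) = (∑ p ∈ P, log p / p) / L := by
          rw [sum_div]; congr! 1 with p; rw [div_div]
      _ ≤ (L + log 4) / L := by gcongr; linarith [sum_primesLE_log_div_le n]
      _ ≤ 1 + log 4 := by
          rw [add_div, div_self hL0.ne']
          gcongr
          exact div_le_self h4 hL
  calc ∏ p ∈ P, (1 + 1 / (p : ℝ))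
      ≤ ∏ p ∈ P, (1 + (p : ℝ) ^ (-(1 + L⁻¹))) * exp (log p / (p * L)) := by
        refine prod_le_prod (fun p hp => by positivity) fun p hp => ?_
        exact one_add_one_div_le_mul_exp (by exact_mod_cast (hprime p hp).one_le) hL0
    _ = (∏ p ∈ P, (1 + (p : ℝ) ^ (-(1 + L⁻¹)))) * exp (∑ p ∈ P, log p / (p * L)) := by
        rw [prod_mul_distrib, exp_sum]
    _ ≤ (L + 1) * exp (1 + log 4) := by
        gcongr
        · calc _ ≤ (1 + L⁻¹) / (1 + L⁻¹ - 1) :=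
                prod_one_add_rpow_neg_le (by simpa using hL0) hprime
            _ = L + 1 := by field_simp; ring
    _ = 4 * exp 1 * (L + 1) := by rw [exp_add, exp_log (by norm_num)]; ring

noncomputable def primesIco (y x : ℝ) : Finset ℕ := {p ∈ Nat.primesBelow ⌈x⌉₊ | y ≤ p}

theorem mem_primesIco {y x : ℝ} {p : ℕ} : p ∈ primesIco y x ↔ p.Prime ∧ y ≤ p ∧ p < x := by
  simp only [primesIco, mem_filter, Nat.mem_primesBelow, Nat.lt_ceil]
  tauto

theorem primesIco_subset_primesLE (y x : ℝ) : primesIco y x ⊆ (⌊x⌋₊).primesLE := fun p hp => by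
  obtain ⟨hp, -, hpx⟩ := mem_primesIco.1 hp
  exact Nat.mem_primesLE.2 ⟨Nat.le_floor hpx.le, hp⟩

theorem primeProd_eq_prod_primesIco (y x : ℝ) :
    primeProd y x = ∏ p ∈ primesIco y x, (1 + 1 / (p : ℝ))⁻¹ := by
  rw [primeProd, ← finprod_mem_coe_finset]
  congr! 1
  ext p
  simp [mem_primesIco]

theorem Sset_subset_image_powerset (y x : ℝ) :
    Sset y x ⊆ (primesIco y x).powerset.image fun s => ∏ p ∈ s, p := by
  rintro n ⟨-, hsq, hfac⟩
  refine mem_image.2 ⟨n.primeFactors, mem_powerset.2 fun p hp => ?_,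
    Nat.prod_primeFactors_of_squarefree hsq⟩
  exact mem_primesIco.2 ⟨Nat.prime_of_mem_primeFactors hp, hfac p hp⟩

theorem finsum_inv_le_exp_mul_prod (y x L : ℝ) :
    ∑ᶠ n ∈ {n | n ∈ Sset y x ∧ 2 * L ≤ (omegaN n : ℝ)}, (n : ℝ)⁻¹
      ≤ exp (-(log 4 * L)) * ∏ p ∈ primesIco y x, (1 + 2 / (p : ℝ)) := by
  set A := {n | n ∈ Sset y x ∧ 2 * L ≤ (omegaN n : ℝ)}
  set F := (primesIco y x).powerset.image fun s => ∏ p ∈ s, p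
  have hP : ∀ p ∈ primesIco y x, p.Prime := fun p hp => (mem_primesIco.1 hp).1
  have hAF : A ⊆ F := fun n hn => Sset_subset_image_powerset y x hn.1
  have hA : A.Finite := F.finite_toSet.subset hAF
  have hrankin : ∀ n ∈ A, (n : ℝ)⁻¹ ≤ exp (-(log 4 * L)) * ∏ p ∈ n.primeFactors, 2 / (p : ℝ) := by
    rintro n ⟨⟨hn, hsq, -⟩, hω⟩
    have h2ω : exp (log 4 * L) ≤ 2 ^ omegaN n := by
      have hlog4 : log 4 = 2 * log 2 := by
        rw [show (4 : ℝ) = 2 ^ 2 by norm_num, Real.log_pow, Nat.cast_ofNat]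
      rw [← exp_log (by positivity : (0 : ℝ) < 2 ^ omegaN n), Real.log_pow, hlog4]
      exact exp_le_exp.2 (by nlinarith [log_pos (by norm_num : (1 : ℝ) < 2)])
    have hprod : ∏ p ∈ n.primeFactors, 2 / (p : ℝ) = 2 ^ omegaN n / n := by
      rw [prod_div_distrib, prod_const, omegaN, ← Nat.cast_prod,
        Nat.prod_primeFactors_of_squarefree hsq]
    have hn' : (0 : ℝ) < n := by exact_mod_cast hn
    rw [hprod, exp_neg, ← div_eq_inv_mul, le_div_iff₀ (exp_pos _), inv_mul_eq_div,
      div_le_div_iff_of_pos_right hn']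
    exact h2ω
  have hsum :
      ∑ n ∈ F, ∏ p ∈ n.primeFactors, 2 / (p : ℝ) = ∏ p ∈ primesIco y x, (1 + 2 / (p : ℝ)) := by
    rw [sum_image (injOn_prod_powerset hP), prod_one_add]
    refine sum_congr rfl fun s hs => ?_
    rw [Nat.primeFactors_prod fun p hp => hP p (mem_powerset.1 hs hp)]
  calc ∑ᶠ n ∈ A, (n : ℝ)⁻¹ = ∑ n ∈ hA.toFinset, (n : ℝ)⁻¹ := finsum_mem_eq_finite_toFinset_sum _ hA
    _ ≤ ∑ n ∈ hA.toFinset, exp (-(log 4 * L)) * ∏ p ∈ n.primeFactors, 2 / (p : ℝ) :=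
        sum_le_sum fun n hn => hrankin n (hA.mem_toFinset.1 hn)
    _ ≤ ∑ n ∈ F, exp (-(log 4 * L)) * ∏ p ∈ n.primeFactors, 2 / (p : ℝ) :=
        sum_le_sum_of_subset_of_nonneg (by simpa using hAF) fun _ _ _ => by positivity
    _ = exp (-(log 4 * L)) * ∏ p ∈ primesIco y x, (1 + 2 / (p : ℝ)) := by rw [← mul_sum, hsum]

theorem exp_neg_log_four_mul_le {L M : ℝ} (hL : 1 ≤ L) (hM : log L ≤ M) :
    exp (-(log 4 * M)) * (4 * exp 1 * (L + 1)) ≤ 8 * exp 1 / L ^ (log 4 - 1) := by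
  have hL0 : 0 < L := by linarith
  have h4 : 0 < log 4 := log_pos (by norm_num)
  have hexp : exp (-(log 4 * M)) * L ^ (log 4 - 1) ≤ 1 / L := by
    rw [rpow_def_of_pos hL0, ← exp_add, one_div, ← exp_log hL0, ← exp_neg, exp_log hL0]
    gcongr
    nlinarith
  rw [le_div_iff₀ (by positivity)]
  calc exp (-(log 4 * M)) * (4 * exp 1 * (L + 1)) * L ^ (log 4 - 1)
      = 4 * exp 1 * (L + 1) * (exp (-(log 4 * M)) * L ^ (log 4 - 1)) := by ring
    _ ≤ 4 * exp 1 * (L + 1) * (1 / L) := by gcongr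
    _ ≤ 8 * exp 1 := by
        rw [mul_one_div, div_le_iff₀ hL0]
        nlinarith [exp_pos 1]

theorem statement18 :
    ∃ C : ℝ, 0 < C ∧ ∀ x y : ℝ, 1 ≤ y → y ≤ x →
      primeProd y x * ∑ᶠ n ∈ {n | n ∈ Sset y x ∧ 2 * LLog2 x ≤ (omegaN n : ℝ)}, ((n : ℝ))⁻¹
        ≤ C / LLog x ^ (Real.log 4 - 1) := by
  refine ⟨8 * exp 1, by positivity, fun x y hy hyx => ?_⟩
  have hL : 1 ≤ LLog x := le_max_left _ _
  have hfloor : log ⌊x⌋₊ ≤ LLog x := by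
    have hx : 0 < (⌊x⌋₊ : ℝ) := by exact_mod_cast Nat.floor_pos.2 (hy.trans hyx)
    exact (log_le_log hx (Nat.floor_le (by linarith))).trans (le_max_right _ _)
  have hfactor : ∀ p ∈ primesIco y x, (1 + 1 / (p : ℝ))⁻¹ * (1 + 2 / p) ≤ 1 + 1 / p := by
    intro p _
    rw [inv_mul_le_iff₀ (by positivity)]
    have : (1 + 1 / (p : ℝ)) * (1 + 1 / p) = 1 + 2 / p + (1 / p) ^ 2 := by ring
    nlinarith [sq_nonneg (1 / (p : ℝ))]
  calc primeProd y x * ∑ᶠ n ∈ {n | n ∈ Sset y x ∧ 2 * LLog2 x ≤ (omegaN n : ℝ)}, (n : ℝ)⁻¹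
      ≤ (∏ p ∈ primesIco y x, (1 + 1 / (p : ℝ))⁻¹) *
          (exp (-(log 4 * LLog2 x)) * ∏ p ∈ primesIco y x, (1 + 2 / (p : ℝ))) := by
        rw [primeProd_eq_prod_primesIco]
        gcongr
        exact finsum_inv_le_exp_mul_prod y x _
    _ ≤ exp (-(log 4 * LLog2 x)) * ∏ p ∈ primesIco y x, (1 + 1 / (p : ℝ)) := by
        rw [mul_left_comm, ← prod_mul_distrib]
        gcongr with p hp
        exact hfactor p hp
    _ ≤ exp (-(log 4 * LLog2 x)) * (4 * exp 1 * (LLog x + 1)) := by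
        gcongr
        exact prod_one_add_one_div_le (primesIco_subset_primesLE y x) hL hfloor
    _ ≤ 8 * exp 1 / LLog x ^ (log 4 - 1) := exp_neg_log_four_mul_le hL (le_max_right _ _)
end
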